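/- Let F be a finite set and k ∈ ℕ, and let g, h : Fin k → Set F be functions such that g is antitone (i < j implies g(j) ⊆ g(i)), h is monotone (i < j implies h(i) ⊆ h(j)), and for all i < j with (g(i),h(i)) ≠ (g(j),h(j)), either g(j) ⊊ g(i) or h(i) ⊊ h(j). Then the number of distinct pairs (g(i),h(i)), i ∈ Fin k, is at most 2·|F| + 1. -/

import Mathlib

/-! Ordered by `⊆` in the first and `⊇` in the second coordinate, the pairs `(g i, h i)` form a
decreasing sequence, so any two distinct pairs are strictly comparable. The potential
`|g i| + |(h i)ᶜ|` is strictly monotone for this order and takes values in `{0, …, 2|F|}`, hence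
it separates distinct pairs. -/

open Set

theorem StrictMono.prod_add {α β : Type*} [PartialOrder α] [PartialOrder β] {u : α → ℕ} {v : β → ℕ}
    (hu : StrictMono u) (hv : StrictMono v) : StrictMono fun p : α × β => u p.1 + v p.2 := by
  intro p q hpq
  rcases Prod.lt_iff.mp hpq with ⟨h₁, h₂⟩ | ⟨h₁, h₂⟩
  · exact Nat.add_lt_add_of_lt_of_le (hu h₁) (hv.monotone h₂)
  · exact Nat.add_lt_add_of_le_of_lt (hu.monotone h₁) (hv h₂)

theorem Antitone.injOn_range_of_strictMono {ι α β : Type*} [LinearOrder ι] [PartialOrder α]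
    [Preorder β] {f : ι → α} (hf : Antitone f) {φ : α → β} (hφ : StrictMono φ) :
    InjOn φ (range f) := by
  rintro _ ⟨i, rfl⟩ _ ⟨j, rfl⟩ hij
  wlog hle : i ≤ j generalizing i j
  · exact (this j i hij.symm (le_of_not_ge hle)).symm
  exact ((hf hle).eq_of_not_lt fun hlt => (hφ hlt).ne hij.symm).symm

theorem Antitone.ncard_range_le {ι α : Type*} [LinearOrder ι] [PartialOrder α] {f : ι → α}
    (hf : Antitone f) {φ : α → ℕ} (hφ : StrictMono φ) {N : ℕ} (hN : ∀ a, φ a ≤ N) :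
    (range f).ncard ≤ N + 1 :=
  calc (range f).ncard ≤ (Iic N).ncard :=
        ncard_le_ncard_of_injOn φ (fun a _ => hN a) (hf.injOn_range_of_strictMono hφ)
          (finite_Iic N)
    _ = N + 1 := by rw [← Finset.coe_Iic, ncard_coe_finset, Nat.card_Iic]

theorem distinct_pairs_bound_general (F : Type*) [Fintype F] (k : ℕ)
    (g h : Fin k → Set F)
    (hg : ∀ i j : Fin k, i < j → g j ⊆ g i)
    (hh : ∀ i j : Fin k, i < j → h i ⊆ h j) :
    Set.ncard {p : Set F × Set F | ∃ i : Fin k, (g i, h i) = p} ≤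
      2 * Fintype.card F + 1 := by
  let f : Fin k → Set F × (Set F)ᵒᵈ := fun i => (g i, OrderDual.toDual (h i))
  have hf : Antitone f := antitone_iff_forall_lt.mpr fun i j hij => ⟨hg i j hij, hh i j hij⟩
  have hcompl : StrictAnti fun s : Set F => sᶜ.ncard :=
    ncard_strictMono.comp_strictAnti fun _ _ => compl_lt_compl_iff_lt.mpr
  have hφ : StrictMono fun p : Set F × (Set F)ᵒᵈ => p.1.ncard + (OrderDual.ofDual p.2)ᶜ.ncard :=
    ncard_strictMono.prod_add hcompl.dual_left
  have hbound (p : Set F × (Set F)ᵒᵈ) :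
      p.1.ncard + (OrderDual.ofDual p.2)ᶜ.ncard ≤ 2 * Fintype.card F := by
    have := ncard_le_card p.1
    have := ncard_le_card (OrderDual.ofDual p.2)ᶜ
    rw [Nat.card_eq_fintype_card] at *
    omega
  -- `(Set F)ᵒᵈ` is a type synonym, so the set of pairs is `range f` by definition.
  exact hf.ncard_range_le hφ hbound

/-- Combinatorial core of the bound on distinct matched pairs of clusters in a
stripe expression: if `g` is antitone, `h` is monotone, and any change of the pair
`(g i, h i)` forces a strict decrease of `g` or a strict increase of `h`, then the
number of distinct pairs is at most `2·|F| + 1`. -/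
theorem distinct_pairs_bound (F : Type*) [Fintype F] (k : ℕ)
    (g h : Fin k → Set F)
    (hg : ∀ i j : Fin k, i < j → g j ⊆ g i)
    (hh : ∀ i j : Fin k, i < j → h i ⊆ h j)
    (hchange : ∀ i j : Fin k, i < j → (g i, h i) ≠ (g j, h j) →
        g j ⊂ g i ∨ h i ⊂ h j) :
    Set.ncard {p : Set F × Set F | ∃ i : Fin k, (g i, h i) = p} ≤
      2 * Fintype.card F + 1 :=
  distinct_pairs_bound_general F k g h hg hh
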